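/- Let G be an étale groupoid, τ a trace on C*(G) (or any positive tracial linear functional on the convolution algebra C_c(G) bounded on each C_c(U)), and U ⊆ G an open bisection with U ∩ Iso(G) = ∅ and s(U) ∩ r(U) = ∅. Then τ(f) = 0 for every f ∈ C_c(U). -/

import Mathlib

open MeasureTheory
open scoped ENNReal

/-- An étale groupoid: a topological groupoid (possibly non-Hausdorff) on the type `G`,
with partially defined multiplication `mul g h` (meaningful when `src g = rng h`),
inversion `inv`, source and range maps `src`, `rng`, and open unit space `unitSpace`
which is locally compact and Hausdorff; the source and range maps are local
homeomorphisms. -/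
structure EtaleGroupoid (G : Type*) [TopologicalSpace G] : Type _ where
  src : G → G
  rng : G → G
  mul : G → G → G
  inv : G → G
  unitSpace : Set G
  src_mem : ∀ g, src g ∈ unitSpace
  rng_mem : ∀ g, rng g ∈ unitSpace
  src_unit : ∀ u ∈ unitSpace, src u = u
  rng_unit : ∀ u ∈ unitSpace, rng u = u
  src_mul : ∀ g h, src g = rng h → src (mul g h) = src h
  rng_mul : ∀ g h, src g = rng h → rng (mul g h) = rng g
  mul_assoc : ∀ g h k, src g = rng h → src h = rng k →
    mul (mul g h) k = mul g (mul h k)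
  src_inv : ∀ g, src (inv g) = rng g
  rng_inv : ∀ g, rng (inv g) = src g
  inv_mul_self : ∀ g, mul (inv g) g = src g
  mul_inv_self : ∀ g, mul g (inv g) = rng g
  mul_src_self : ∀ g, mul g (src g) = g
  rng_mul_self : ∀ g, mul (rng g) g = g
  isOpen_unitSpace : IsOpen unitSpace
  t2_unitSpace : ∀ x ∈ unitSpace, ∀ y ∈ unitSpace, x ≠ y →
    ∃ U V : Set G, IsOpen U ∧ IsOpen V ∧ x ∈ U ∧ y ∈ V ∧ U ∩ V = ∅
  locallyCompact_unitSpace : ∀ x ∈ unitSpace, ∀ U : Set G, IsOpen U → x ∈ U →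
    ∃ K V : Set G, IsCompact K ∧ IsOpen V ∧ x ∈ V ∧ V ⊆ K ∧ K ⊆ U ∩ unitSpace
  continuous_inv : Continuous inv
  continuousOn_mul : ContinuousOn (fun p : G × G => mul p.1 p.2)
    {p : G × G | src p.1 = rng p.2}
  etale_src : ∀ g : G, ∃ U : Set G, IsOpen U ∧ g ∈ U ∧ Set.InjOn src U ∧
    ContinuousOn src U ∧ ∀ V ⊆ U, IsOpen V → IsOpen (src '' V)
  etale_rng : ∀ g : G, ∃ U : Set G, IsOpen U ∧ g ∈ U ∧ Set.InjOn rng U ∧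
    ContinuousOn rng U ∧ ∀ V ⊆ U, IsOpen V → IsOpen (rng '' V)

namespace EtaleGroupoid

variable {G : Type*} [TopologicalSpace G] (E : EtaleGroupoid G)

/-- The isotropy of `G`: arrows with equal source and range. -/
def iso : Set G := {g : G | E.src g = E.rng g}

/-- An (open) bisection: an open set on which both the source and range maps are
injective (hence homeomorphisms onto their images). -/
def IsBisection (U : Set G) : Prop :=
  IsOpen U ∧ Set.InjOn E.src U ∧ Set.InjOn E.rng U

/-- The semifinite part of a measure:
`μ_sf(A) = sup { μ(B) : B ⊆ A Borel, μ(B) < ∞ }`. -/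
noncomputable def sfPart [MeasurableSpace G] (μ : Measure G) (A : Set G) : ℝ≥0∞ :=
  ⨆ (B : Set G) (_ : MeasurableSet B) (_ : B ⊆ A) (_ : μ B ≠ ⊤), μ B

/-- A Radon measure on the unit space `G⁰`: a Borel measure on `G` concentrated on
`G⁰` which is finite on compact subsets of `G⁰`, inner regular on open subsets of `G⁰`
and outer regular on Borel subsets of `G⁰`. -/
def IsRadonOnUnits [MeasurableSpace G] (μ : Measure G) : Prop :=
  μ E.unitSpaceᶜ = 0 ∧
  (∀ K : Set G, K ⊆ E.unitSpace → IsCompact K → μ K ≠ ⊤) ∧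
  (∀ U : Set G, IsOpen U → U ⊆ E.unitSpace →
    μ U = ⨆ (K : Set G) (_ : IsCompact K) (_ : K ⊆ U), μ K) ∧
  (∀ A : Set G, MeasurableSet A → A ⊆ E.unitSpace →
    μ A = ⨅ (U : Set G) (_ : IsOpen U) (_ : A ⊆ U ∧ U ⊆ E.unitSpace), μ U)

/-- `G` is essentially free with respect to `μ`:
`μ_sf(s(U ∩ Iso(G) \ G⁰)) = 0` for every open bisection `U`. -/
def EssentiallyFree [MeasurableSpace G] (μ : Measure G) : Prop :=
  ∀ U : Set G, E.IsBisection U →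
    sfPart μ (E.src '' ((U ∩ E.iso) \ E.unitSpace)) = 0

end EtaleGroupoid

namespace EtaleGroupoid

variable (G : Type*) [TopologicalSpace G]

/-- The generating set of the convolution algebra `𝒞_c(G)`: functions which are
continuous on some open Hausdorff subset `U ⊆ G`, vanish outside a compact subset of
`U`, and vanish outside `U`. -/
def CcGen : Set (G → ℂ) :=
  {f : G → ℂ | ∃ U : Set G, IsOpen U ∧
    (∀ x ∈ U, ∀ y ∈ U, x ≠ y →
      ∃ V W : Set G, IsOpen V ∧ IsOpen W ∧ x ∈ V ∧ y ∈ W ∧ V ∩ W = ∅) ∧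
    ContinuousOn f U ∧
    ∃ K : Set G, K ⊆ U ∧ IsCompact K ∧ ∀ g ∉ K, f g = 0}

/-- The convolution algebra `𝒞_c(G)`: the linear span of the compactly supported
functions which are continuous on an open Hausdorff subset. -/
noncomputable def Cc : Submodule ℂ (G → ℂ) :=
  Submodule.span ℂ (CcGen G)

variable {G} (E : EtaleGroupoid G)

/-- The convolution product `(a * b)(g) = ∑_{g₁ g₂ = g} a(g₁) b(g₂)`. -/
noncomputable def convolution (a b : G → ℂ) : G → ℂ :=
  fun g => ∑' p : {p : G × G // E.src p.1 = E.rng p.2 ∧ E.mul p.1 p.2 = g},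
    a p.1.1 * b p.1.2

/-- The involution `a*(g) = conj (a (g⁻¹))`. -/
def starFun (a : G → ℂ) : G → ℂ :=
  fun g => star (a (E.inv g))

end EtaleGroupoid

/-!
Pick `h ∈ C_c(G⁰)` equal to `1` on `s(supp f)` and to `0` on `r(supp f)`; these compact subsets
of the locally compact Hausdorff space `G⁰` are disjoint, so Urysohn's lemma applies. Convolving
with a function on `G⁰` multiplies pointwise, `(f * h)(g) = f(g) h(s(g))` and
`(h * f)(g) = h(r(g)) f(g)`, so `f * h = f` and `h * f = 0`, whence
`τ(f) = τ(f * h) = τ(h * f) = 0`.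
-/

open Set

namespace EtaleGroupoid

variable {G : Type*} [TopologicalSpace G] (E : EtaleGroupoid G)

theorem continuous_src : Continuous E.src :=
  continuous_iff_continuousAt.2 fun g => by
    obtain ⟨V, hVo, hgV, -, hVc, -⟩ := E.etale_src g
    exact hVc.continuousAt (hVo.mem_nhds hgV)

theorem continuous_rng : Continuous E.rng :=
  continuous_iff_continuousAt.2 fun g => by
    obtain ⟨V, hVo, hgV, -, hVc, -⟩ := E.etale_rng g
    exact hVc.continuousAt (hVo.mem_nhds hgV)

theorem isCompact_preimage_val_unitSpace {K : Set G} (hK : IsCompact K)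
    (hKS : K ⊆ E.unitSpace) : IsCompact (Subtype.val ⁻¹' K : Set E.unitSpace) :=
  Topology.IsInducing.subtypeVal.isCompact_preimage' hK (by rwa [Subtype.range_coe])

instance t2Space_unitSpace : T2Space E.unitSpace where
  t2 x y hxy := by
    obtain ⟨V, W, hVo, hWo, hxV, hyW, hVW⟩ :=
      E.t2_unitSpace x x.2 y y.2 (Subtype.coe_ne_coe.2 hxy)
    exact ⟨_, _, hVo.preimage continuous_subtype_val, hWo.preimage continuous_subtype_val,
      hxV, hyW, (disjoint_iff_inter_eq_empty.2 hVW).preimage _⟩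

instance locallyCompactSpace_unitSpace : LocallyCompactSpace E.unitSpace where
  local_compact_nhds x n hn := by
    obtain ⟨t, ht, htn⟩ := (mem_nhds_subtype _ x n).1 hn
    obtain ⟨W, hWt, hWo, hxW⟩ := mem_nhds_iff.1 ht
    obtain ⟨K, V, hKc, hVo, hxV, hVK, hKW⟩ := E.locallyCompact_unitSpace x x.2 W hWo hxW
    refine ⟨Subtype.val ⁻¹' K, ?_, fun z hz => htn (hWt (hKW hz).1),
      E.isCompact_preimage_val_unitSpace hKc fun z hz => (hKW hz).2⟩
    exact mem_nhds_iff.2 ⟨Subtype.val ⁻¹' V, preimage_mono hVK,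
      hVo.preimage continuous_subtype_val, hxV⟩

theorem exists_mem_Cc_eqOn_one_zero {A B : Set G} (hA : IsCompact A) (hB : IsCompact B)
    (hAS : A ⊆ E.unitSpace) (hBS : B ⊆ E.unitSpace) (hAB : Disjoint A B) :
    ∃ h ∈ Cc G, (∀ g ∉ E.unitSpace, h g = 0) ∧ EqOn h 1 A ∧ EqOn h 0 B := by
  classical
  obtain ⟨φ, hφA, hφB, hφc, -⟩ := exists_continuous_one_zero_of_isCompact
    (E.isCompact_preimage_val_unitSpace hA hAS)
    (E.isCompact_preimage_val_unitSpace hB hBS).isClosed (hAB.preimage _)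
  let h : G → ℂ := fun g => if hg : g ∈ E.unitSpace then (φ ⟨g, hg⟩ : ℂ) else 0
  have h_of_mem {g : G} (hg : g ∈ E.unitSpace) : h g = φ ⟨g, hg⟩ := dif_pos hg
  refine ⟨h, Submodule.subset_span ⟨E.unitSpace, E.isOpen_unitSpace, E.t2_unitSpace, ?_,
    Subtype.val '' tsupport φ, fun _ ⟨x, _, hx⟩ => hx ▸ x.2,
    hφc.image continuous_subtype_val, ?_⟩, fun g hg => dif_neg hg,
    fun g hg => ?_, fun g hg => ?_⟩
  · rw [continuousOn_iff_continuous_domRestrict]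
    convert Complex.continuous_ofReal.comp φ.continuous using 1
    exact funext fun x => h_of_mem x.2
  · intro g hg
    by_cases hgS : g ∈ E.unitSpace
    · rw [h_of_mem hgS, image_eq_zero_of_notMem_tsupport fun hc => hg ⟨_, hc, rfl⟩,
        Complex.ofReal_zero]
    · exact dif_neg hgS
  · simp [h_of_mem (hAS hg), hφA (show (⟨g, hAS hg⟩ : E.unitSpace) ∈ _ from hg)]
  · simp [h_of_mem (hBS hg), hφB (show (⟨g, hBS hg⟩ : E.unitSpace) ∈ _ from hg)]

/-- The only factorization `g = g₁ g₂` with `g₂` a unit is `g = g (s g)`. -/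
theorem convolution_apply_of_unit_right (f h : G → ℂ) (hh : ∀ g ∉ E.unitSpace, h g = 0)
    (g : G) : E.convolution f h g = f g * h (E.src g) := by
  dsimp only [convolution]
  refine tsum_eq_single (β := {p : G × G // _})
    ⟨(g, E.src g), (E.rng_unit _ (E.src_mem g)).symm, E.mul_src_self g⟩ ?_
  rintro ⟨⟨g₁, g₂⟩, hcomp, hmul⟩ hne
  by_cases hg₂ : g₂ ∈ E.unitSpace
  · have hsrc : E.src g₁ = g₂ := hcomp.trans (E.rng_unit _ hg₂)
    have hg₁ : g₁ = g := by rw [← hmul, ← hsrc, E.mul_src_self]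
    exact absurd (Subtype.ext (Prod.ext hg₁ (hsrc.symm.trans (congrArg E.src hg₁)))) hne
  · exact mul_eq_zero_of_right _ (hh _ hg₂)

/-- The only factorization `g = g₁ g₂` with `g₁` a unit is `g = (r g) g`. -/
theorem convolution_apply_of_unit_left (h f : G → ℂ) (hh : ∀ g ∉ E.unitSpace, h g = 0)
    (g : G) : E.convolution h f g = h (E.rng g) * f g := by
  dsimp only [convolution]
  refine tsum_eq_single (β := {p : G × G // _})
    ⟨(E.rng g, g), E.src_unit _ (E.rng_mem g), E.rng_mul_self g⟩ ?_
  rintro ⟨⟨g₁, g₂⟩, hcomp, hmul⟩ hne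
  by_cases hg₁ : g₁ ∈ E.unitSpace
  · have hrng : g₁ = E.rng g₂ := (E.src_unit _ hg₁).symm.trans hcomp
    have hg₂ : g₂ = g := by rw [← hmul, hrng, E.rng_mul_self]
    exact absurd (Subtype.ext (Prod.ext (hrng.trans (congrArg E.rng hg₂)) hg₂)) hne
  · exact mul_eq_zero_of_left (hh _ hg₁) _

end EtaleGroupoid

open EtaleGroupoid in
theorem trace_vanishes_on_bisection_off_isotropy_general
    {G : Type*} [TopologicalSpace G] (E : EtaleGroupoid G)
    (τ : Cc G →ₗ[ℂ] ℂ)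
    (htracial : ∀ (a b : G → ℂ) (_ : a ∈ Cc G) (_ : b ∈ Cc G)
      (hab : E.convolution a b ∈ Cc G) (hba : E.convolution b a ∈ Cc G),
      τ ⟨E.convolution a b, hab⟩ = τ ⟨E.convolution b a, hba⟩)
    (U : Set G)
    (hsr : (E.src '' U) ∩ (E.rng '' U) = ∅)
    (f : G → ℂ)
    (hsupp : ∃ K : Set G, K ⊆ U ∧ IsCompact K ∧ ∀ g ∉ K, f g = 0)
    (hf : f ∈ Cc G) :
    τ ⟨f, hf⟩ = 0 := by
  obtain ⟨K, hKU, hKc, hKf⟩ := hsupp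
  have hdisj : Disjoint (E.src '' K) (E.rng '' K) :=
    (disjoint_iff_inter_eq_empty.2 hsr).mono (image_mono hKU) (image_mono hKU)
  obtain ⟨h, hh, hh_units, hh_one, hh_zero⟩ := E.exists_mem_Cc_eqOn_one_zero
    (hKc.image E.continuous_src) (hKc.image E.continuous_rng)
    (image_subset_iff.2 fun g _ => E.src_mem g) (image_subset_iff.2 fun g _ => E.rng_mem g) hdisj
  have hfh : E.convolution f h = f := funext fun g => by
    rw [E.convolution_apply_of_unit_right f h hh_units]
    by_cases hg : g ∈ K
    · rw [hh_one (mem_image_of_mem _ hg), Pi.one_apply, mul_one]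
    · rw [hKf g hg, zero_mul]
  have hhf : E.convolution h f = 0 := funext fun g => by
    rw [E.convolution_apply_of_unit_left h f hh_units, Pi.zero_apply]
    by_cases hg : g ∈ K
    · rw [hh_zero (mem_image_of_mem _ hg), Pi.zero_apply, zero_mul]
    · rw [hKf g hg, mul_zero]
  have hfh_mem : E.convolution f h ∈ Cc G := by rwa [hfh]
  have hhf_mem : E.convolution h f ∈ Cc G := by rw [hhf]; exact zero_mem _
  calc τ ⟨f, hf⟩ = τ ⟨E.convolution f h, hfh_mem⟩ := by simp only [hfh]
    _ = τ ⟨E.convolution h f, hhf_mem⟩ := htracial f h hf hh hfh_mem hhf_mem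
    _ = 0 := by simp only [hhf]; exact map_zero τ

open EtaleGroupoid in
/-- Let `G` be an étale groupoid, `τ` a positive tracial linear
functional on the convolution algebra `𝒞_c(G)` (e.g. the restriction of a trace on
`C*(G)`), and `U ⊆ G` an open bisection with `U ∩ Iso(G) = ∅` and `s(U) ∩ r(U) = ∅`.
Then `τ(f) = 0` for every `f ∈ C_c(U)`. -/
theorem trace_vanishes_on_bisection_off_isotropy
    {G : Type*} [TopologicalSpace G] (E : EtaleGroupoid G)
    (τ : Cc G →ₗ[ℂ] ℂ)
    (htracial : ∀ (a b : G → ℂ) (_ : a ∈ Cc G) (_ : b ∈ Cc G)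
      (hab : E.convolution a b ∈ Cc G) (hba : E.convolution b a ∈ Cc G),
      τ ⟨E.convolution a b, hab⟩ = τ ⟨E.convolution b a, hba⟩)
    (U : Set G) (hU : E.IsBisection U)
    (hUiso : U ∩ E.iso = ∅)
    (hsr : (E.src '' U) ∩ (E.rng '' U) = ∅)
    (f : G → ℂ) (hfU : ∀ g ∉ U, f g = 0) (hfc : ContinuousOn f U)
    (hsupp : ∃ K : Set G, K ⊆ U ∧ IsCompact K ∧ ∀ g ∉ K, f g = 0)
    (hf : f ∈ Cc G) :
    τ ⟨f, hf⟩ = 0 :=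
  trace_vanishes_on_bisection_off_isotropy_general E τ htracial U hsr f hsupp hf
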